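/- For the 2-chain-to-i-star family, among binary matrices x : {0,…,i} × {0,1,2} → {0,1} in which every row has at most one 1 (interpreted as each of the i+1 star nodes being unmapped or mapped to one of three chain nodes uniformly), the fraction of 'zero' states equals (1/2)·(1 + (3/4)^i), and the fraction of 'negative' states equals (1/2)·(1 − (3/4)^i). A state is negative iff the central node (row 0) is mapped to chain node 0 or 1 and at least one row k ∈ {1,…,i} is mapped to chain node 1 or 2, respectively. -/

import Mathlib

/-!
Splitting off row 0, a state is negative exactly when row 0 is `1` and one of the `i` leaf rows
is `2`, or row 0 is `2` and one of the leaf rows is `3`. Each alternative leaves `4^i - 3^i`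
choices of the leaf rows, so `2 (4^i - 3^i)` of the `4^(i+1)` states are negative.
-/

/-- Rows are encoded in `Fin 4`: `0` is the zero row and `c + 1` the indicator of chain node `c`. -/
def negState (i : ℕ) (r : Fin (i + 1) → Fin 4) : Prop :=
  (r 0 = 1 ∧ ∃ k : Fin (i + 1), k ≠ 0 ∧ r k = 2) ∨
  (r 0 = 2 ∧ ∃ k : Fin (i + 1), k ≠ 0 ∧ r k = 3)

theorem Nat.card_subtype_not_add {α : Type*} [Finite α] (p : α → Prop) :
    Nat.card {x // ¬ p x} + Nat.card {x // p x} = Nat.card α := by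
  have := Fintype.ofFinite α
  classical
  simp only [Nat.card_eq_fintype_card, Fintype.card_subtype_compl]
  exact Nat.sub_add_cancel (Fintype.card_subtype_le p)

theorem Nat.card_exists_apply_eq {ι α : Type*} [Finite ι] [Finite α] (c : α) :
    Nat.card {f : ι → α // ∃ j, f j = c}
      = Nat.card α ^ Nat.card ι - (Nat.card α - 1) ^ Nat.card ι := by
  have hforall : Nat.card {f : ι → α // ∀ j, f j ≠ c} = (Nat.card α - 1) ^ Nat.card ι := by
    rw [Nat.card_congr (Equiv.subtypePiEquivPi (p := fun _ b => b ≠ c)), Nat.card_fun,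
      ← Nat.card_subtype_not_add (· = c), Nat.card_unique (α := {x // x = c}),
      Nat.add_sub_cancel]
  rw [← hforall, ← Nat.card_fun, ← Nat.card_subtype_not_add fun f : ι → α => ∀ j, f j ≠ c,
    Nat.add_sub_cancel_right]
  simp only [ne_eq, not_forall, not_not]

theorem Nat.card_subtype_fin_cons {n : ℕ} {α : Type*} [Fintype α]
    (p : (Fin (n + 1) → α) → Prop) :
    Nat.card {r // p r} = ∑ a, Nat.card {t : Fin n → α // p (Fin.cons a t)} := by
  rw [← Nat.card_sigma]
  exact Nat.card_congr ((Fin.consEquiv fun _ => α).subtypeEquivOfSubtype.symm.trans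
    (Equiv.subtypeProdEquivSigmaSubtype fun a t => p (Fin.cons a t)))

theorem negState_cons (i : ℕ) (a : Fin 4) (t : Fin i → Fin 4) :
    negState i (Fin.cons a t) ↔ (a = 1 ∧ ∃ j, t j = 2) ∨ (a = 2 ∧ ∃ j, t j = 3) := by
  simp [negState, Fin.exists_fin_succ]

theorem card_negState (i : ℕ) : Nat.card {r // negState i r} = 2 * (4 ^ i - 3 ^ i) := by
  simp only [Nat.card_subtype_fin_cons, negState_cons, Fin.sum_univ_four, Fin.isValue,
    Fin.reduceEq, false_and, true_and, or_false, false_or, or_self, Nat.card_of_isEmpty,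
    Nat.card_exists_apply_eq, Nat.card_fin, Nat.add_one_sub_one, zero_add, add_zero]
  ring

theorem stmt14_general (i : ℕ) :
    ((Nat.card {r : Fin (i + 1) → Fin 4 // negState i r} : ℝ) / 4 ^ (i + 1)
        = (1 / 2) * (1 - (3 / 4) ^ i))
    ∧ ((Nat.card {r : Fin (i + 1) → Fin 4 // ¬ negState i r} : ℝ) / 4 ^ (i + 1)
        = (1 / 2) * (1 + (3 / 4) ^ i)) := by
  have hneg : (Nat.card {r // negState i r} : ℝ) = 2 * (4 ^ i - 3 ^ i) := by
    rw [card_negState, Nat.cast_mul, Nat.cast_sub (Nat.pow_le_pow_left (by norm_num) i)]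
    norm_num
  have hzero : (Nat.card {r // ¬ negState i r} : ℝ) = 4 ^ (i + 1) - 2 * (4 ^ i - 3 ^ i) := by
    rw [← hneg, eq_sub_iff_add_eq]
    exact_mod_cast (Nat.card_subtype_not_add _).trans (by simp)
  rw [hneg, hzero, div_pow]
  constructor <;> field_simp <;> ring

/-- Under the uniform distribution on the `4^{i+1}` valid matrices
(each row independently one of 4 equally likely values), the fraction of
'negative' states equals `(1/2)·(1 − (3/4)^i)` and the fraction of 'zero'
(non-negative) states equals `(1/2)·(1 + (3/4)^i)`. -/
theorem stmt14 (i : ℕ) (hi : 1 ≤ i) :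
    ((Nat.card {r : Fin (i + 1) → Fin 4 // negState i r} : ℝ) / 4 ^ (i + 1)
        = (1 / 2) * (1 - (3 / 4) ^ i))
    ∧ ((Nat.card {r : Fin (i + 1) → Fin 4 // ¬ negState i r} : ℝ) / 4 ^ (i + 1)
        = (1 / 2) * (1 + (3 / 4) ^ i)) :=
  stmt14_general i
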